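/- arXiv:math/0311439 — 9 statements merged into one kernel-verified Lean document; each statement's English description precedes it below -/
import Mathlib

section
/- Let 0 < c1 < c2 < A be real numbers and set θ = (c2 − c1)/(A − c1). Let a_1, …, a_N be real numbers with a_j ≤ A for every 1 ≤ j ≤ N and ∑_{j=1}^{N} a_j ≥ c2·N. Then there exist an integer l ≥ θ·N and integers 1 ≤ n_1 < n_2 < ⋯ < n_l ≤ N such that ∑_{j=n+1}^{n_i} a_j ≥ c1·(n_i − n) for every integer 0 ≤ n < n_i and every i = 1, …, l. -/
/-!
Let `S n = ∑_{j ≤ n} (a j - c1)` and take for the `n i` the record times of `S`, the `n` with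
`S k ≤ S n` for all `k < n`; the required inequality at `n i` is exactly `S k ≤ S (n i)`.
Each step raises `S` by at most `A - c1`, and `S` can only climb above its earlier values at a
record time, so `(c2 - c1) * N ≤ S N ≤ (A - c1) * #records`.
-/

open Finset

def IsRecordTime {α : Type*} [Preorder α] (S : ℕ → α) (n : ℕ) : Prop :=
  ∀ k < n, S k ≤ S n

section OrderedAddGroup

variable {α : Type*} [AddCommGroup α] [LinearOrder α] [IsOrderedAddMonoid α]

theorem le_add_card_filter_isRecordTime_nsmul {S : ℕ → α} [DecidablePred (IsRecordTime S)]
    {D : α} (hD : 0 ≤ D) {n : ℕ} (hS : ∀ m < n, S (m + 1) ≤ S m + D) :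
    S n ≤ S 0 + #{t ∈ Icc 1 n | IsRecordTime S t} • D := by
  induction n using Nat.strong_induction_on with
  | _ n ih =>
  rcases n with _ | m
  · simp
  have ih' (k : ℕ) (hk : k ≤ m) : S k ≤ S 0 + #{t ∈ Icc 1 k | IsRecordTime S t} • D :=
    ih k (Nat.lt_succ_of_le hk) fun i hi => hS i (by omega)
  by_cases hrec : IsRecordTime S (m + 1)
  · have hcard : #{t ∈ Icc 1 (m + 1) | IsRecordTime S t} =
        #{t ∈ Icc 1 m | IsRecordTime S t} + 1 := by
      rw [← insert_Icc_right_eq_Icc_add_one (by omega), filter_insert, if_pos hrec,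
        card_insert_of_notMem (by simp)]
    calc S (m + 1) ≤ S m + D := hS m (by omega)
      _ ≤ S 0 + #{t ∈ Icc 1 m | IsRecordTime S t} • D + D := by grw [ih' m le_rfl]
      _ = _ := by rw [hcard, succ_nsmul, add_assoc]
  · obtain ⟨k, hk, hlt⟩ : ∃ k < m + 1, S (m + 1) < S k := by
      simpa [IsRecordTime] using hrec
    calc S (m + 1) ≤ S k := hlt.le
      _ ≤ S 0 + #{t ∈ Icc 1 k | IsRecordTime S t} • D := ih' k (by omega)
      _ ≤ _ := by gcongr

theorem IsRecordTime.sum_Ioc_nonneg {b : ℕ → α} {m k : ℕ}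
    (h : IsRecordTime (fun n => ∑ j ∈ Ioc 0 n, b j) m) (hk : k < m) :
    0 ≤ ∑ j ∈ Ioc k m, b j := by
  have hkm : ∑ j ∈ Ioc 0 k, b j ≤ ∑ j ∈ Ioc 0 m, b j := h k hk
  rw [← sum_Ioc_consecutive b (Nat.zero_le k) hk.le] at hkm
  simpa using hkm

end OrderedAddGroup

theorem pliss_lemma_general (c1 c2 A : ℝ) (hc12 : c1 < c2) (hc2A : c2 < A)
    (N : ℕ) (a : ℕ → ℝ) (ha : ∀ j, 1 ≤ j → j ≤ N → a j ≤ A)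
    (hsum : c2 * N ≤ ∑ j ∈ Finset.Icc 1 N, a j) :
    ∃ (l : ℕ) (n : Fin l → ℕ),
      (c2 - c1) / (A - c1) * N ≤ (l : ℝ) ∧
      StrictMono n ∧
      (∀ i, 1 ≤ n i ∧ n i ≤ N) ∧
      (∀ i, ∀ k, k < n i →
        c1 * ((n i : ℝ) - (k : ℝ)) ≤ ∑ j ∈ Finset.Icc (k + 1) (n i), a j) := by
  classical
  set S : ℕ → ℝ := fun n => ∑ j ∈ Ioc 0 n, (a j - c1)
  set T := {t ∈ Icc 1 N | IsRecordTime S t}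
  have hshift (k m : ℕ) (hkm : k ≤ m) :
      ∑ j ∈ Ioc k m, (a j - c1) = ∑ j ∈ Icc (k + 1) m, a j - c1 * (m - k) := by
    rw [sum_sub_distrib, sum_const, Nat.card_Ioc, nsmul_eq_mul, Nat.cast_sub hkm,
      Icc_add_one_left_eq_Ioc, mul_comm]
  have hgrowth : (c2 - c1) * N ≤ S N := by
    have := hshift 0 N N.zero_le
    simp only [zero_add, CharP.cast_eq_zero, sub_zero] at this
    linarith
  have hstep (m : ℕ) (hm : m < N) : S (m + 1) ≤ S m + (A - c1) := by
    simp only [S, sum_Ioc_succ_top m.zero_le]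
    linarith [ha (m + 1) (by omega) hm]
  have hcount : S N ≤ #T * (A - c1) := by
    have := le_add_card_filter_isRecordTime_nsmul (by linarith) hstep
    rwa [show S 0 = 0 by simp [S], zero_add, nsmul_eq_mul] at this
  refine ⟨#T, T.orderEmbOfFin rfl, ?_, (T.orderEmbOfFin rfl).strictMono, fun i => ?_,
    fun i k hk => ?_⟩
  · rw [div_mul_eq_mul_div, div_le_iff₀ (by linarith)]
    linarith
  · exact mem_Icc.1 (mem_filter.1 (T.orderEmbOfFin_mem rfl i)).1
  · have := (mem_filter.1 (T.orderEmbOfFin_mem rfl i)).2.sum_Ioc_nonneg hk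
    linarith [hshift k _ hk.le]

/-- **Pliss lemma.** Given `0 < c1 < c2 < A` and reals `a 1, …, a N` bounded above by `A`
with `∑_{j=1}^N a j ≥ c2 * N`, there exist `l ≥ θ * N` (with `θ = (c2 - c1)/(A - c1)`)
and times `1 ≤ n 1 < ⋯ < n l ≤ N` such that `∑_{j=n+1}^{n i} a j ≥ c1 * (n i - n)`
for every `0 ≤ n < n i`. -/
theorem pliss_lemma (c1 c2 A : ℝ) (hc1 : 0 < c1) (hc12 : c1 < c2) (hc2A : c2 < A)
    (N : ℕ) (a : ℕ → ℝ) (ha : ∀ j, 1 ≤ j → j ≤ N → a j ≤ A)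
    (hsum : c2 * N ≤ ∑ j ∈ Finset.Icc 1 N, a j) :
    ∃ (l : ℕ) (n : Fin l → ℕ),
      (c2 - c1) / (A - c1) * N ≤ (l : ℝ) ∧
      StrictMono n ∧
      (∀ i, 1 ≤ n i ∧ n i ≤ N) ∧
      (∀ i, ∀ k, k < n i →
        c1 * ((n i : ℝ) - (k : ℝ)) ≤ ∑ j ∈ Finset.Icc (k + 1) (n i), a j) :=
  pliss_lemma_general c1 c2 A hc12 hc2A N a ha hsum
end

section
/- Let (M, m) be a finite measure space, let (H_j)_{j ≥ 1} be a sequence of measurable subsets of M, let θ > 0, and let A ⊆ M be a measurable set with m(A) > 0 such that for every x ∈ A there exists N(x) ∈ ℕ with #{1 ≤ j ≤ n : x ∈ H_j} ≥ θ·n for every n ≥ N(x). Then there exists n_0 ∈ ℕ such that for every n ≥ n_0 one has (1/n)·∑_{j=1}^{n} m(A ∩ H_j) ≥ (θ/2)·m(A). -/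
/-!
Integrating the counting function `#{j ≤ n | x ∈ H j}` over `A` gives `∑_{j ≤ n} m (A ∩ H j)`
(Fubini for a finite sum). On `A` the normalized counts have `liminf` at least `θ`, so Fatou's
lemma bounds the `liminf` of the averages `(1/n) ∑_{j ≤ n} m (A ∩ H j)` below by `θ m(A)`, which
exceeds `(θ/2) m(A)` because `θ m(A) > 0`.
-/

open MeasureTheory Filter Finset
open scoped Classical ENNReal

theorem card_filter_mem_eq_sum_indicator {M : Type*} {H : ℕ → Set M} (s : Finset ℕ) (x : M) :
    (#{j ∈ s | x ∈ H j} : ℝ≥0∞) = ∑ j ∈ s, (H j).indicator 1 x := by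
  simp only [card_filter, Nat.cast_sum, Nat.cast_ite, Nat.cast_one, Nat.cast_zero,
    Set.indicator_apply, Pi.one_apply]

section CountingFunction

variable {M : Type*} [MeasurableSpace M] {H : ℕ → Set M}

theorem measurable_card_filter_mem (hH : ∀ j, MeasurableSet (H j)) (s : Finset ℕ) :
    Measurable fun x => (#{j ∈ s | x ∈ H j} : ℝ≥0∞) := by
  simp_rw [card_filter_mem_eq_sum_indicator]
  exact Finset.measurable_sum _ fun j _ => measurable_one.indicator (hH j)

theorem lintegral_card_filter_mem (μ : Measure M) (hH : ∀ j, MeasurableSet (H j))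
    (s : Finset ℕ) : ∫⁻ x, (#{j ∈ s | x ∈ H j} : ℝ≥0∞) ∂μ = ∑ j ∈ s, μ (H j) := by
  simp_rw [card_filter_mem_eq_sum_indicator]
  rw [lintegral_finsetSum _ fun j _ => measurable_one.indicator (hH j)]
  exact Finset.sum_congr rfl fun j _ => lintegral_indicator_one (hH j)

theorem mul_measure_le_liminf_sum_measure_inter_div (μ : Measure M)
    (hH : ∀ j, MeasurableSet (H j)) (A : Set M) (θ : ℝ≥0∞)
    (hfreq : ∀ x ∈ A, ∀ᶠ n : ℕ in atTop, θ * n ≤ #{j ∈ Icc 1 n | x ∈ H j}) :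
    θ * μ A ≤ liminf (fun n : ℕ => (∑ j ∈ Icc 1 n, μ (A ∩ H j)) / n) atTop := by
  set freq : ℕ → M → ℝ≥0∞ := fun n x => #{j ∈ Icc 1 n | x ∈ H j} / n
  have hfreq_meas : ∀ n, Measurable (freq n) := fun n =>
    (measurable_card_filter_mem hH _).div_const _
  have hθ_le : ∀ x ∈ A, θ ≤ liminf (freq · x) atTop := fun x hx => by
    refine le_liminf_of_le (by isBoundedDefault) ?_
    filter_upwards [hfreq x hx, eventually_ge_atTop 1] with n hn hn1
    exact ENNReal.le_div_iff_mul_le (by simp; omega) (by simp) |>.2 hn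
  calc θ * μ A = ∫⁻ _ in A, θ ∂μ := (setLIntegral_const A θ).symm
    _ ≤ ∫⁻ x in A, liminf (freq · x) atTop ∂μ :=
      setLIntegral_mono (Measurable.liminf hfreq_meas) hθ_le
    _ ≤ liminf (fun n => ∫⁻ x in A, freq n x ∂μ) atTop := lintegral_liminf_le hfreq_meas
    _ = _ := by
      congr with n
      simp only [freq, ENNReal.div_eq_inv_mul]
      rw [lintegral_const_mul _ (measurable_card_filter_mem hH _),
        lintegral_card_filter_mem _ hH]
      simp only [Measure.restrict_apply (hH _), Set.inter_comm]

end CountingFunction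

theorem freq_hyperbolic_times_general {M : Type*} [MeasurableSpace M]
    (m : Measure M) [IsFiniteMeasure m]
    (H : ℕ → Set M) (hH : ∀ j, MeasurableSet (H j))
    (θ : ℝ) (hθ : 0 < θ)
    (A : Set M) (hApos : 0 < m A)
    (hfreq : ∀ x ∈ A, ∃ N : ℕ, ∀ n, N ≤ n →
      θ * (n : ℝ) ≤ (((Finset.Icc 1 n).filter fun j => x ∈ H j).card : ℝ)) :
    ∃ n₀ : ℕ, ∀ n, n₀ ≤ n →
      (θ / 2) * (m A).toReal ≤ (1 / (n : ℝ)) * ∑ j ∈ Finset.Icc 1 n, (m (A ∩ H j)).toReal := by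
  have hfreq' : ∀ x ∈ A, ∀ᶠ n : ℕ in atTop,
      ENNReal.ofReal θ * n ≤ #{j ∈ Icc 1 n | x ∈ H j} := fun x hx => by
    obtain ⟨N, hN⟩ := hfreq x hx
    filter_upwards [eventually_ge_atTop N] with n hn
    rw [← ENNReal.ofReal_natCast n, ← ENNReal.ofReal_mul hθ.le, ← ENNReal.ofReal_natCast]
    exact ENNReal.ofReal_le_ofReal (hN n hn)
  have hhalf : ENNReal.ofReal (θ / 2) * m A < ENNReal.ofReal θ * m A :=
    ENNReal.mul_lt_mul_left hApos.ne' (measure_ne_top m A)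
      ((ENNReal.ofReal_lt_ofReal_iff hθ).2 (half_lt_self hθ))
  obtain ⟨n₀, hn₀⟩ := eventually_atTop.1 <|
    (eventually_lt_of_lt_liminf (hhalf.trans_le
      (mul_measure_le_liminf_sum_measure_inter_div m hH A _ hfreq'))).and
    (eventually_ge_atTop 1)
  refine ⟨n₀, fun n hn => ?_⟩
  obtain ⟨hlt, hn1⟩ := hn₀ n hn
  have hsum_ne_top : ∑ j ∈ Icc 1 n, m (A ∩ H j) ≠ ∞ :=
    ENNReal.sum_ne_top.2 fun j _ => measure_ne_top m _
  have hreal := ENNReal.toReal_mono (ENNReal.div_ne_top hsum_ne_top (by simp; omega)) hlt.le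
  rw [ENNReal.toReal_mul, ENNReal.toReal_ofReal (by positivity), ENNReal.toReal_div,
    ENNReal.toReal_sum fun j _ => measure_ne_top m _, ENNReal.toReal_natCast] at hreal
  rwa [one_div_mul_eq_div]

/-- If almost every point of a set `A` of positive measure has frequency of times `j`
with `x ∈ H j` at least `θ`, then for all large `n` the averaged measures
`(1/n) ∑_{j=1}^n m (A ∩ H j)` are at least `(θ/2) m A`. -/
theorem freq_hyperbolic_times {M : Type*} [MeasurableSpace M]
    (m : Measure M) [IsFiniteMeasure m]
    (H : ℕ → Set M) (hH : ∀ j, MeasurableSet (H j))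
    (θ : ℝ) (hθ : 0 < θ)
    (A : Set M) (hA : MeasurableSet A) (hApos : 0 < m A)
    (hfreq : ∀ x ∈ A, ∃ N : ℕ, ∀ n, N ≤ n →
      θ * (n : ℝ) ≤ (((Finset.Icc 1 n).filter fun j => x ∈ H j).card : ℝ)) :
    ∃ n₀ : ℕ, ∀ n, n₀ ≤ n →
      (θ / 2) * (m A).toReal ≤ (1 / (n : ℝ)) * ∑ j ∈ Finset.Icc 1 n, (m (A ∩ H j)).toReal :=
  freq_hyperbolic_times_general m H hH θ hθ A hApos hfreq
end

section
/- Let (M, m) be a finite measure space and let (Δ_n)_{n ≥ 0}, (A_n)_{n ≥ 0}, (B_n)_{n ≥ 0}, (R_n)_{n ≥ 1} be measurable subsets of M such that for every n ≥ 1: Δ_n = Δ_{n−1} \ R_n, and Δ_n is the disjoint union of A_n and B_n. Assume there is an integer R_0 ≥ 1 such that B_n = ∅, R_n = ∅ and A_n = Δ_n = Δ_0 for all n ≤ R_0. Let a_0, b_0, c_0 > 0 with b_0 + c_0 < 1 be constants such that for every n ≥ 1: m(B_{n−1} ∩ A_n) ≥ a_0·m(B_{n−1}), m(A_{n−1} ∩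 B_n) ≤ b_0·m(A_{n−1}), and m(A_{n−1} ∩ R_n) ≤ c_0·m(A_{n−1}). Then, with a_1 = ((1 + a_0)·b_0 + c_0)/(a_0·(1 − b_0 − c_0)), one has m(B_n) ≤ a_1·m(A_n) for every n ≥ 1. -/
open MeasureTheory Set

/-! Write `x n = m (A n)` and `y n = m (B n)`. Splitting `A n` and `B n` along the cover
`A (n+1) ∪ B (n+1) ∪ R (n+1)` of `A n ∪ B n` turns the measure relations into the linear bounds
`y (n+1) ≤ b0 x n + (1 - a0) y n` and `x (n+1) ≥ (1 - b0 - c0) x n + a0 y n`. These keep the cone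
`y ≤ a1 x` invariant as soon as `(1 + a0) b0 + c0 ≤ a0 a1 (1 - b0 - c0)`, and `B 0 = ∅` starts
the induction. -/

theorem le_mul_of_linear_recurrence {a0 b0 c0 a1 x y x' y' : ℝ} (ha0 : 0 < a0) (hb0 : 0 ≤ b0)
    (hc0 : 0 ≤ c0) (hbc : b0 + c0 < 1) (ha1 : (1 + a0) * b0 + c0 ≤ a0 * a1 * (1 - b0 - c0))
    (hx : 0 ≤ x) (hy : 0 ≤ y) (hyx : y ≤ a1 * x)
    (hx' : (1 - b0 - c0) * x + a0 * y ≤ x') (hy' : y' ≤ b0 * x + (1 - a0) * y) :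
    y' ≤ a1 * x' := by
  have hD : 0 < 1 - b0 - c0 := by linarith
  have ha1_nonneg : 0 ≤ a1 := by
    by_contra! h
    nlinarith [mul_neg_of_pos_of_neg ha0 h]
  have hb0_le : b0 ≤ a1 * (1 - b0 - c0) := by nlinarith
  have hs_le : b0 + c0 ≤ a0 * a1 := by nlinarith [mul_nonneg ha0.le ha1_nonneg]
  suffices b0 * x + (1 - a0) * y ≤ a1 * ((1 - b0 - c0) * x + a0 * y) by
    nlinarith [mul_le_mul_of_nonneg_left hx' ha1_nonneg]
  rcases le_or_gt 0 (a0 * a1 + a0 - 1) with hc | hc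
  · nlinarith [mul_nonneg (sub_nonneg.2 hb0_le) hx, mul_nonneg hc hy]
  · -- `y` has a negative coefficient in the defect, so the worst case is `y = a1 * x`
    have hend : b0 ≤ a1 * (1 - b0 - c0) + a1 * (a0 * a1 + a0 - 1) := by
      nlinarith [mul_nonneg ha1_nonneg (sub_nonneg.2 hs_le)]
    nlinarith [mul_le_mul_of_nonpos_left hyx hc.le, mul_le_mul_of_nonneg_right hend hx]

section MeasureBounds

variable {α : Type*} [MeasurableSpace α] {μ : Measure α} [IsFiniteMeasure μ] {A B A' B' R : Set α}

theorem measureReal_le_inter_add_sub_inter (hA' : MeasurableSet A') (hsub : B' ⊆ A ∪ B)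
    (hdisj : Disjoint A' B') : μ.real B' ≤ μ.real (A ∩ B') + (μ.real B - μ.real (B ∩ A')) := by
  have hcover : B' ⊆ (A ∩ B') ∪ (B \ A') := fun x hx => by
    rcases hsub hx with hA | hB
    · exact Or.inl ⟨hA, hx⟩
    · exact Or.inr ⟨hB, hdisj.notMem_of_mem_right hx⟩
  calc μ.real B' ≤ μ.real (A ∩ B') + μ.real (B \ A') :=
        (measureReal_mono hcover).trans (measureReal_union_le _ _)
    _ = μ.real (A ∩ B') + (μ.real B - μ.real (B ∩ A')) := by
        rw [← measureReal_inter_add_sdiff (s := B) hA', add_sub_cancel_left]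

theorem measureReal_sub_sub_add_inter_le (hB : MeasurableSet B) (hsub : A ⊆ A' ∪ B' ∪ R)
    (hdisj : Disjoint A B) :
    μ.real A - μ.real (A ∩ B') - μ.real (A ∩ R) + μ.real (B ∩ A') ≤ μ.real A' := by
  have hA : μ.real A ≤ μ.real (A' \ B) + μ.real (A ∩ B') + μ.real (A ∩ R) := by
    have hcover : A ⊆ (A' \ B) ∪ (A ∩ B') ∪ (A ∩ R) := fun x hx => by
      rcases hsub hx with (hA' | hB') | hR
      · exact Or.inl (Or.inl ⟨hA', hdisj.notMem_of_mem_left hx⟩)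
      · exact Or.inl (Or.inr ⟨hx, hB'⟩)
      · exact Or.inr ⟨hx, hR⟩
    refine (measureReal_mono hcover).trans ?_
    exact (measureReal_union_le _ _).trans (add_le_add_left (measureReal_union_le _ _) _)
  have hA' := measureReal_sdiff_add_inter (μ := μ) (s := A') hB
  rw [inter_comm] at hA'
  linarith

end MeasureBounds

section Sequences

variable {α : Type*} {Δ A B R : ℕ → Set α}

theorem B_succ_subset_union (hΔ : ∀ n, Δ (n + 1) = Δ n \ R (n + 1))
    (hunion : ∀ n, Δ n = A n ∪ B n) (n : ℕ) : B (n + 1) ⊆ A n ∪ B n := by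
  rw [← hunion n]
  exact (hunion (n + 1) ▸ subset_union_right).trans (hΔ n ▸ sdiff_subset)

theorem A_subset_succ_union (hΔ : ∀ n, Δ (n + 1) = Δ n \ R (n + 1))
    (hunion : ∀ n, Δ n = A n ∪ B n) (n : ℕ) : A n ⊆ A (n + 1) ∪ B (n + 1) ∪ R (n + 1) := by
  intro x hx
  by_cases hR : x ∈ R (n + 1)
  · exact Or.inr hR
  · left
    rw [← hunion, hΔ]
    exact ⟨hunion n ▸ Or.inl hx, hR⟩

end Sequences

theorem measure_B_le_A_general {M : Type*} [MeasurableSpace M]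
    (m : Measure M) [IsFiniteMeasure m]
    (Δ A B : ℕ → Set M) (R : ℕ → Set M)
    (hAmeas : ∀ n, MeasurableSet (A n))
    (hBmeas : ∀ n, MeasurableSet (B n))
    (hΔ : ∀ n, 1 ≤ n → Δ n = Δ (n - 1) \ R n)
    (hunion : ∀ n, 1 ≤ n → Δ n = A n ∪ B n)
    (hdisj : ∀ n, 1 ≤ n → A n ∩ B n = ∅)
    (R₀ : ℕ)
    (hinit : ∀ n, n ≤ R₀ → B n = ∅ ∧ A n = Δ 0 ∧ Δ n = Δ 0)
    (a0 b0 c0 : ℝ) (ha0 : 0 < a0) (hb0 : 0 < b0) (hc0 : 0 < c0) (hbc : b0 + c0 < 1)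
    (hm2 : ∀ n, 1 ≤ n → a0 * (m (B (n - 1))).toReal ≤ (m (B (n - 1) ∩ A n)).toReal)
    (hm3 : ∀ n, 1 ≤ n → (m (A (n - 1) ∩ B n)).toReal ≤ b0 * (m (A (n - 1))).toReal)
    (hm3' : ∀ n, 1 ≤ n → (m (A (n - 1) ∩ R n)).toReal ≤ c0 * (m (A (n - 1))).toReal) :
    ∀ n, 1 ≤ n →
      (m (B n)).toReal ≤
        (((1 + a0) * b0 + c0) / (a0 * (1 - b0 - c0))) * (m (A n)).toReal := by
  obtain ⟨hB0, hA0, -⟩ := hinit 0 R₀.zero_le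
  have hΔ' : ∀ n, Δ (n + 1) = Δ n \ R (n + 1) := fun n => hΔ _ n.succ_pos
  have hunion' : ∀ n, Δ n = A n ∪ B n := by
    rintro (_ | n)
    · rw [hA0, hB0, union_empty]
    · exact hunion _ n.succ_pos
  have hdisj' : ∀ n, Disjoint (A n) (B n) := by
    rintro (_ | n)
    · rw [hB0]; exact disjoint_empty _
    · exact disjoint_iff_inter_eq_empty.2 (hdisj _ n.succ_pos)
  set a1 := ((1 + a0) * b0 + c0) / (a0 * (1 - b0 - c0)) with ha1_def
  have hD : 0 < 1 - b0 - c0 := by linarith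
  have ha1 : a0 * a1 * (1 - b0 - c0) = (1 + a0) * b0 + c0 := by
    rw [ha1_def]; field_simp
  suffices ∀ n, m.real (B n) ≤ a1 * m.real (A n) from fun n _ => this n
  intro n
  induction n with
  | zero =>
    rw [hB0, measureReal_empty]
    exact mul_nonneg (by positivity)
      measureReal_nonneg
  | succ n ih =>
    have h2 : a0 * m.real (B n) ≤ m.real (B n ∩ A (n + 1)) := hm2 (n + 1) n.succ_pos
    have h3 : m.real (A n ∩ B (n + 1)) ≤ b0 * m.real (A n) := hm3 (n + 1) n.succ_pos
    have h3' : m.real (A n ∩ R (n + 1)) ≤ c0 * m.real (A n) := hm3' (n + 1) n.succ_pos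
    have hA := measureReal_sub_sub_add_inter_le (μ := m) (hBmeas n)
      (A_subset_succ_union hΔ' hunion' n) (hdisj' n)
    have hB := measureReal_le_inter_add_sub_inter (μ := m) (hAmeas (n + 1))
      (B_succ_subset_union hΔ' hunion' n) (hdisj' (n + 1))
    exact le_mul_of_linear_recurrence ha0 hb0.le hc0.le hbc ha1.ge measureReal_nonneg
      measureReal_nonneg ih (by linarith) (by linarith)

/-- Abstract metric estimate for the inductive Markov partition construction:
under the relations (m₂), (m₃) one has `m (B n) ≤ a1 * m (A n)` for every `n ≥ 1`,
with `a1 = ((1 + a0) * b0 + c0) / (a0 * (1 - b0 - c0))`. -/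
theorem measure_B_le_A {M : Type*} [MeasurableSpace M]
    (m : Measure M) [IsFiniteMeasure m]
    (Δ A B : ℕ → Set M) (R : ℕ → Set M)
    (hΔmeas : ∀ n, MeasurableSet (Δ n)) (hAmeas : ∀ n, MeasurableSet (A n))
    (hBmeas : ∀ n, MeasurableSet (B n)) (hRmeas : ∀ n, MeasurableSet (R n))
    (hΔ : ∀ n, 1 ≤ n → Δ n = Δ (n - 1) \ R n)
    (hunion : ∀ n, 1 ≤ n → Δ n = A n ∪ B n)
    (hdisj : ∀ n, 1 ≤ n → A n ∩ B n = ∅)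
    (R₀ : ℕ) (hR₀ : 1 ≤ R₀)
    (hinit : ∀ n, n ≤ R₀ → B n = ∅ ∧ A n = Δ 0 ∧ Δ n = Δ 0)
    (hinitR : ∀ n, 1 ≤ n → n ≤ R₀ → R n = ∅)
    (a0 b0 c0 : ℝ) (ha0 : 0 < a0) (hb0 : 0 < b0) (hc0 : 0 < c0) (hbc : b0 + c0 < 1)
    (hm2 : ∀ n, 1 ≤ n → a0 * (m (B (n - 1))).toReal ≤ (m (B (n - 1) ∩ A n)).toReal)
    (hm3 : ∀ n, 1 ≤ n → (m (A (n - 1) ∩ B n)).toReal ≤ b0 * (m (A (n - 1))).toReal)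
    (hm3' : ∀ n, 1 ≤ n → (m (A (n - 1) ∩ R n)).toReal ≤ c0 * (m (A (n - 1))).toReal) :
    ∀ n, 1 ≤ n →
      (m (B n)).toReal ≤
        (((1 + a0) * b0 + c0) / (a0 * (1 - b0 - c0))) * (m (A n)).toReal :=
  measure_B_le_A_general m Δ A B R hAmeas hBmeas hΔ hunion hdisj R₀ hinit a0 b0 c0 ha0 hb0 hc0 hbc
    hm2 hm3 hm3'
end

section
/- Let (M, m) be a finite measure space and let (Δ_n)_{n ≥ 0}, (A_n)_{n ≥ 0}, (B_n)_{n ≥ 0}, (R_n)_{n ≥ 1} be measurable subsets of M such that for every n ≥ 1: Δ_n = Δ_{n−1} \ R_n, and Δ_n is the disjoint union of A_n and B_n. Let b_0, c_0 > 0 with b_0 + c_0 < 1 satisfy, for every n ≥ 1, m(A_{n−1} ∩ B_n) ≤ b_0·m(A_{n−1}) and m(A_{n−1} ∩ R_n) ≤ c_0·m(A_{n−1}), and let a_1 > 0 satisfy m(B_n) ≤ a_1·m(A_n) for every n ≥ 1. Then, with c_2 = (1 + a_1)/(1 − b_0 − c_0), one has m(Δ_n) ≤ c_2·m(Δ_{n+1})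 for every n ≥ 1. -/
/-!
Only the good part `A_n` matters: `Δ_n ⊆ A_n ∪ B_n` gives `m(Δ_n) ≤ (1 + a₁) m(A_n)`, while
`A_n \ R_{n+1} ⊆ Δ_{n+1}` gives `m(Δ_{n+1}) ≥ (1 - c₀) m(A_n) ≥ (1 - b₀ - c₀) m(A_n)`.
-/

open MeasureTheory

namespace MeasureTheory

variable {M : Type*} [MeasurableSpace M] (m : Measure M)

lemma measureReal_le_inter_add_sdiff (s t : Set M) :
    m.real s ≤ m.real (s ∩ t) + m.real (s \ t) := by
  simpa only [Set.inter_union_sdiff] using measureReal_union_le (μ := m) (s ∩ t) (s \ t)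

lemma measureReal_le_one_add_mul_of_subset_union [IsFiniteMeasure m] {D A B : Set M} {a : ℝ}
    (hD : D ⊆ A ∪ B) (hB : m.real B ≤ a * m.real A) :
    m.real D ≤ (1 + a) * m.real A :=
  calc m.real D ≤ m.real (A ∪ B) := measureReal_mono hD
    _ ≤ m.real A + m.real B := measureReal_union_le A B
    _ ≤ (1 + a) * m.real A := by linarith

lemma one_sub_mul_measureReal_le_of_sdiff_subset [IsFiniteMeasure m] {A R D : Set M} {c : ℝ}
    (hD : A \ R ⊆ D) (hR : m.real (A ∩ R) ≤ c * m.real A) :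
    (1 - c) * m.real A ≤ m.real D :=
  calc (1 - c) * m.real A ≤ m.real A - m.real (A ∩ R) := by linarith
    _ ≤ m.real (A \ R) := by linarith [measureReal_le_inter_add_sdiff m A R]
    _ ≤ m.real D := measureReal_mono hD

lemma measureReal_le_div_mul_of_subset_union_of_sdiff_subset [IsFiniteMeasure m]
    {D D' A B R : Set M} {a c : ℝ}
    (ha : 0 ≤ 1 + a) (hc : c < 1) (hD : D ⊆ A ∪ B) (hD' : A \ R ⊆ D')
    (hB : m.real B ≤ a * m.real A) (hR : m.real (A ∩ R) ≤ c * m.real A) :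
    m.real D ≤ (1 + a) / (1 - c) * m.real D' := by
  have hA : m.real A ≤ m.real D' / (1 - c) := by
    rw [le_div_iff₀ (by linarith), mul_comm]
    exact one_sub_mul_measureReal_le_of_sdiff_subset m hD' hR
  calc m.real D ≤ (1 + a) * m.real A := measureReal_le_one_add_mul_of_subset_union m hD hB
    _ ≤ (1 + a) * (m.real D' / (1 - c)) := by gcongr
    _ = (1 + a) / (1 - c) * m.real D' := by ring

end MeasureTheory

theorem measure_Delta_ratio_general {M : Type*} [MeasurableSpace M]
    (m : Measure M) [IsFiniteMeasure m]
    (Δ A B : ℕ → Set M) (R : ℕ → Set M)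
    (hΔ : ∀ n, 1 ≤ n → Δ n = Δ (n - 1) \ R n)
    (hunion : ∀ n, 1 ≤ n → Δ n = A n ∪ B n)
    (b0 c0 : ℝ) (hb0 : 0 < b0) (hbc : b0 + c0 < 1)
    (hm3' : ∀ n, 1 ≤ n → (m (A (n - 1) ∩ R n)).toReal ≤ c0 * (m (A (n - 1))).toReal)
    (a1 : ℝ) (ha1 : 0 < a1)
    (hBA : ∀ n, 1 ≤ n → (m (B n)).toReal ≤ a1 * (m (A n)).toReal) :
    ∀ n, 1 ≤ n →
      (m (Δ n)).toReal ≤ ((1 + a1) / (1 - b0 - c0)) * (m (Δ (n + 1))).toReal := by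
  intro n hn
  have hsdiff : A n \ R (n + 1) ⊆ Δ (n + 1) := by
    rw [hΔ (n + 1) (by omega), Nat.add_sub_cancel, hunion n hn]
    exact Set.sdiff_subset_sdiff_left Set.subset_union_left
  have hR : m.real (A n ∩ R (n + 1)) ≤ c0 * m.real (A n) := hm3' (n + 1) (by omega)
  calc m.real (Δ n) ≤ (1 + a1) / (1 - c0) * m.real (Δ (n + 1)) :=
        measureReal_le_div_mul_of_subset_union_of_sdiff_subset m (by linarith) (by linarith)
          (hunion n hn).subset hsdiff (hBA n hn) hR
    _ ≤ (1 + a1) / (1 - b0 - c0) * m.real (Δ (n + 1)) := by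
        gcongr <;> linarith

/-- Abstract metric estimate for the inductive Markov partition construction:
from `m(A_{n-1} ∩ B_n) ≤ b0 m(A_{n-1})`, `m(A_{n-1} ∩ R_n) ≤ c0 m(A_{n-1})` and
`m(B_n) ≤ a1 m(A_n)` one gets `m(Δ_n) ≤ c2 m(Δ_{n+1})` for `n ≥ 1`,
with `c2 = (1 + a1)/(1 - b0 - c0)`. -/
theorem measure_Delta_ratio {M : Type*} [MeasurableSpace M]
    (m : Measure M) [IsFiniteMeasure m]
    (Δ A B : ℕ → Set M) (R : ℕ → Set M)
    (hΔmeas : ∀ n, MeasurableSet (Δ n)) (hAmeas : ∀ n, MeasurableSet (A n))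
    (hBmeas : ∀ n, MeasurableSet (B n)) (hRmeas : ∀ n, MeasurableSet (R n))
    (hΔ : ∀ n, 1 ≤ n → Δ n = Δ (n - 1) \ R n)
    (hunion : ∀ n, 1 ≤ n → Δ n = A n ∪ B n)
    (hdisj : ∀ n, 1 ≤ n → A n ∩ B n = ∅)
    (b0 c0 : ℝ) (hb0 : 0 < b0) (hc0 : 0 < c0) (hbc : b0 + c0 < 1)
    (hm3 : ∀ n, 1 ≤ n → (m (A (n - 1) ∩ B n)).toReal ≤ b0 * (m (A (n - 1))).toReal)
    (hm3' : ∀ n, 1 ≤ n → (m (A (n - 1) ∩ R n)).toReal ≤ c0 * (m (A (n - 1))).toReal)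
    (a1 : ℝ) (ha1 : 0 < a1)
    (hBA : ∀ n, 1 ≤ n → (m (B n)).toReal ≤ a1 * (m (A n)).toReal) :
    ∀ n, 1 ≤ n →
      (m (Δ n)).toReal ≤ ((1 + a1) / (1 - b0 - c0)) * (m (Δ (n + 1))).toReal :=
  measure_Delta_ratio_general m Δ A B R hΔ hunion b0 c0 hb0 hbc hm3' a1 ha1 hBA
end

section
/- Let N ≥ 0 and R_0 ≥ 1 be integers, b_1 ∈ (0, 1], let (d_n)_{n ≥ 0} be a nonincreasing sequence of nonnegative real numbers, and let (q_n)_{n ≥ 1} be a sequence with q_n ∈ [0, 1] such that d_{n+N} ≤ (1 − b_1·q_n)·d_{n−1} for every n ≥ 1. Then for every n ≥ R_0 one has d_{n+N} ≤ exp( −(b_1/(N+1))·∑_{j=R_0}^{n} q_j ) · d_0. -/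
/-!
With `1 - x ≤ exp (-x)` the recurrence reads `d (n + N) ≤ exp (-b1 * q n) * d (n - 1)`.
It compares two terms at distance `N + 1`, so it becomes a one-step recurrence for the window
product `P n = d n * d (n + 1) * ⋯ * d (n + N)`: passing from `P (n - 1)` to `P n` replaces the
factor `d (n - 1)` by `d (n + N)`. Iterating gives `P n ≤ exp (-b1 * ∑ q) * d 0 ^ (N + 1)`, and
since `d` is nonincreasing, `d (n + N) ^ (N + 1) ≤ P n`; taking `(N + 1)`-th roots gives the
bound.
-/

open Finset Real

theorem le_exp_neg_sum_mul_of_succ_le {u a : ℕ → ℝ} {m : ℕ}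
    (h : ∀ n, m ≤ n → u (n + 1) ≤ exp (-a (n + 1)) * u n) :
    ∀ n, m ≤ n → u n ≤ exp (-∑ j ∈ Ioc m n, a j) * u m := by
  intro n hn
  induction n, hn using Nat.le_induction with
  | base => simp
  | succ n hmn ih =>
    calc u (n + 1) ≤ exp (-a (n + 1)) * u n := h n hmn
      _ ≤ exp (-a (n + 1)) * (exp (-∑ j ∈ Ioc m n, a j) * u m) := by gcongr
      _ = exp (-∑ j ∈ Ioc m (n + 1), a j) * u m := by
        rw [sum_Ioc_succ_top hmn, ← mul_assoc, ← exp_add, neg_add, add_comm]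

def windowProd (d : ℕ → ℝ) (N n : ℕ) : ℝ :=
  ∏ i ∈ range (N + 1), d (n + i)

section windowProd

variable {d : ℕ → ℝ} {N : ℕ}

theorem windowProd_succ_le (hd : ∀ n, 0 ≤ d n) {n : ℕ} {c : ℝ} (h : d (n + 1 + N) ≤ c * d n) :
    windowProd d N (n + 1) ≤ c * windowProd d N n := by
  have hcommon : ∏ i ∈ range N, d (n + 1 + i) = ∏ i ∈ range N, d (n + (i + 1)) :=
    prod_congr rfl fun i _ => by rw [add_assoc, add_comm 1 i]
  rw [windowProd, windowProd, prod_range_succ, prod_range_succ', hcommon, add_zero,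
    mul_left_comm]
  exact mul_le_mul_of_nonneg_left h (prod_nonneg fun i _ => hd _)

theorem pow_le_windowProd (hd : ∀ n, 0 ≤ d n) (hmono : Antitone d) (n : ℕ) :
    d (n + N) ^ (N + 1) ≤ windowProd d N n := by
  calc d (n + N) ^ (N + 1) = ∏ _i ∈ range (N + 1), d (n + N) := by rw [prod_const, card_range]
    _ ≤ windowProd d N n :=
      prod_le_prod (fun _ _ => hd _) fun i hi =>
        hmono (by have := mem_range.1 hi; omega)

theorem windowProd_le_pow (hd : ∀ n, 0 ≤ d n) (hmono : Antitone d) (n : ℕ) :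
    windowProd d N n ≤ d n ^ (N + 1) := by
  calc windowProd d N n ≤ ∏ _i ∈ range (N + 1), d n :=
        prod_le_prod (fun _ _ => hd _) fun _ _ => hmono (Nat.le_add_right _ _)
    _ = d n ^ (N + 1) := by rw [prod_const, card_range]

end windowProd

theorem exp_bound_from_recurrence_general (N R₀ : ℕ) (hR₀ : 1 ≤ R₀)
    (b1 : ℝ)
    (d : ℕ → ℝ) (hdpos : ∀ n, 0 ≤ d n) (hdmono : Antitone d)
    (q : ℕ → ℝ)
    (hrec : ∀ n, 1 ≤ n → d (n + N) ≤ (1 - b1 * q n) * d (n - 1)) :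
    ∀ n, R₀ ≤ n →
      d (n + N) ≤ Real.exp (-(b1 / ((N : ℝ) + 1)) * ∑ j ∈ Finset.Icc R₀ n, q j) * d 0 := by
  intro n hn
  set S := ∑ j ∈ Icc R₀ n, q j
  have hstep : ∀ m, windowProd d N (m + 1) ≤ exp (-(b1 * q (m + 1))) * windowProd d N m :=
    fun m => windowProd_succ_le hdpos <| (hrec (m + 1) m.succ_pos).trans <|
      mul_le_mul_of_nonneg_right (one_sub_le_exp_neg _) (hdpos _)
  have hiter := le_exp_neg_sum_mul_of_succ_le (u := windowProd d N) (a := fun j => b1 * q j)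
    (m := R₀ - 1) (fun m _ => hstep m) n (by omega)
  rw [← mul_sum, ← Icc_add_one_left_eq_Ioc, Nat.sub_add_cancel hR₀] at hiter
  refine le_of_pow_le_pow_left₀ N.succ_ne_zero (mul_nonneg (exp_nonneg _) (hdpos 0)) ?_
  calc d (n + N) ^ (N + 1) ≤ windowProd d N n := pow_le_windowProd hdpos hdmono n
    _ ≤ exp (-(b1 * S)) * windowProd d N (R₀ - 1) := hiter
    _ ≤ exp (-(b1 * S)) * d 0 ^ (N + 1) := by
      gcongr
      exact (windowProd_le_pow hdpos hdmono _).trans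
        (pow_le_pow_left₀ (hdpos _) (hdmono (Nat.zero_le _)) _)
    _ = (exp (-(b1 / ((N : ℝ) + 1)) * S) * d 0) ^ (N + 1) := by
      rw [mul_pow, ← exp_nat_mul]
      congr 2
      push_cast
      field_simp

/-- From the recurrence `d (n+N) ≤ (1 - b1 * q n) * d (n-1)` (for `n ≥ 1`) one derives,
for a nonincreasing nonnegative sequence `d` and `q n ∈ [0,1]`, the exponential bound
`d (n+N) ≤ exp (-(b1/(N+1)) * ∑_{j=R₀}^n q j) * d 0` for all `n ≥ R₀`. -/
theorem exp_bound_from_recurrence (N R₀ : ℕ) (hR₀ : 1 ≤ R₀)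
    (b1 : ℝ) (hb1 : 0 < b1) (hb1' : b1 ≤ 1)
    (d : ℕ → ℝ) (hdpos : ∀ n, 0 ≤ d n) (hdmono : Antitone d)
    (q : ℕ → ℝ) (hq : ∀ n, 1 ≤ n → q n ∈ Set.Icc (0 : ℝ) 1)
    (hrec : ∀ n, 1 ≤ n → d (n + N) ≤ (1 - b1 * q n) * d (n - 1)) :
    ∀ n, R₀ ≤ n →
      d (n + N) ≤ Real.exp (-(b1 / ((N : ℝ) + 1)) * ∑ j ∈ Finset.Icc R₀ n, q j) * d 0 :=
  exp_bound_from_recurrence_general N R₀ hR₀ b1 d hdpos hdmono q hrec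
end

section
/- Let N ≥ 0 and R_0 ≥ 1 be integers, b_1 ∈ (0, 1], let (d_n)_{n ≥ 0} be a nonincreasing sequence of nonnegative real numbers, and let (q_n)_{n ≥ 1} be a sequence with q_n ∈ [0, 1] such that d_{n+N} ≤ (1 − b_1·q_n)·d_{n−1} for every n ≥ 1. Let α > 0 and θ ∈ (0, 1], let n ≥ R_0, and suppose that #{ j : 1 ≤ j ≤ n and q_j ≥ α } ≥ (θ/12)·n. Then d_{n+N} ≤ exp( −(b_1·α/(N+1))·((θ/12)·n − R_0) ) · d_0. -/
open scoped Classical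

/-!
Each index `j` with `q j ≥ α` gives a contraction `d (j + N) ≤ exp (-b1 * α) * d (j - 1)`, which
spans `N + 1` consecutive indices. Going down from `m` by strong induction, every window of `N + 1`
indices that contains good indices thus contributes a factor `exp (-b1 * α)`, so
`d (m + N) ≤ exp (-b1 * α * K m / (N + 1)) * d 0`, where `K m` counts the good indices in `[1, m]`.
Since `K n ≥ θ n / 12`, the stated bound follows.
-/

open Finset Real

section Counting

variable (p : ℕ → Prop) [DecidablePred p]

theorem card_filter_Icc_one_le_add (a m : ℕ) :
    #{j ∈ Icc 1 m | p j} ≤ #{j ∈ Icc 1 a | p j} + (m - a) :=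
  calc #{j ∈ Icc 1 m | p j} ≤ #({j ∈ Icc 1 a | p j} ∪ Icc (a + 1) m) := by
        refine card_le_card fun j hj => ?_
        simp only [mem_filter, mem_Icc, mem_union] at hj ⊢
        rcases le_or_gt j a with hja | hja
        · exact Or.inl ⟨⟨hj.1.1, hja⟩, hj.2⟩
        · exact Or.inr ⟨hja, hj.1.2⟩
    _ ≤ #{j ∈ Icc 1 a | p j} + (m - a) := by
        refine (card_union_le _ _).trans ?_
        simp

theorem card_filter_Icc_one_le_pred {m : ℕ} (hm : ¬ p m) :
    #{j ∈ Icc 1 m | p j} ≤ #{j ∈ Icc 1 (m - 1) | p j} := by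
  refine card_le_card fun j hj => ?_
  simp only [mem_filter, mem_Icc] at hj ⊢
  have hjm : j ≠ m := fun h => hm (h ▸ hj.2)
  exact ⟨⟨hj.1.1, by omega⟩, hj.2⟩

end Counting

theorem le_exp_card_div_mul_of_antitone {d : ℕ → ℝ} (hd : Antitone d) (hd0 : 0 ≤ d 0)
    {N : ℕ} {β : ℝ} (hβ : 0 ≤ β) (p : ℕ → Prop) [DecidablePred p]
    (hstep : ∀ j, 1 ≤ j → p j → d (j + N) ≤ exp (-β) * d (j - 1)) (m : ℕ) :
    d (m + N) ≤ exp (-β * #{j ∈ Icc 1 m | p j} / (N + 1)) * d 0 := by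
  induction m using Nat.strong_induction_on with
  | _ m ih =>
  have hN : (0 : ℝ) < N + 1 := by positivity
  have hdecay : ∀ {x y : ℝ}, x ≤ y →
      exp (-β * y / (N + 1)) * d 0 ≤ exp (-β * x / (N + 1)) * d 0 := fun hxy =>
    mul_le_mul_of_nonneg_right
      (exp_le_exp.mpr (div_le_div_of_nonneg_right (by nlinarith) hN.le)) hd0
  rcases Nat.eq_zero_or_pos m with rfl | hm
  · simpa using hd (Nat.zero_le N)
  by_cases hpm : p m
  swap
  · calc d (m + N) ≤ d (m - 1 + N) := hd (by omega)
      _ ≤ _ := ih (m - 1) (by omega)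
      _ ≤ _ := hdecay (by exact_mod_cast card_filter_Icc_one_le_pred p hpm)
  rcases le_or_gt m N with hmN | hmN
  · have hK : #{j ∈ Icc 1 m | p j} ≤ N + 1 :=
      (card_filter_le _ _).trans (by rw [Nat.card_Icc]; omega)
    calc d (m + N) ≤ exp (-β) * d (m - 1) := hstep m hm hpm
      _ ≤ exp (-β * (N + 1) / (N + 1)) * d 0 := by
        rw [mul_div_cancel_right₀ _ hN.ne']
        gcongr
        exact hd (Nat.zero_le _)
      _ ≤ _ := hdecay (by exact_mod_cast hK)
  · set m' := m - 1 - N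
    have hK : #{j ∈ Icc 1 m | p j} ≤ #{j ∈ Icc 1 m' | p j} + (N + 1) := by
      have := card_filter_Icc_one_le_add p m' m
      omega
    calc d (m + N) ≤ exp (-β) * d (m - 1) := hstep m hm hpm
      _ ≤ exp (-β) * d (m' + N) := by gcongr; exact hd (by omega)
      _ ≤ exp (-β) * (exp (-β * #{j ∈ Icc 1 m' | p j} / (N + 1)) * d 0) := by
        gcongr
        exact ih m' (by omega)
      _ = exp (-β * (#{j ∈ Icc 1 m' | p j} + (N + 1)) / (N + 1)) * d 0 := by
        rw [← mul_assoc, ← exp_add]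
        field_simp
        ring_nf
      _ ≤ _ := hdecay (by exact_mod_cast hK)

theorem exp_decay_case_not_F_general (N R₀ : ℕ)
    (b1 : ℝ) (hb1 : 0 < b1)
    (d : ℕ → ℝ) (hdpos : ∀ n, 0 ≤ d n) (hdmono : Antitone d)
    (q : ℕ → ℝ)
    (hrec : ∀ n, 1 ≤ n → d (n + N) ≤ (1 - b1 * q n) * d (n - 1))
    (α θ : ℝ) (hα : 0 < α)
    (n : ℕ)
    (hcard : (θ / 12) * (n : ℝ) ≤
      (((Finset.Icc 1 n).filter fun j => α ≤ q j).card : ℝ)) :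
    d (n + N) ≤
      Real.exp (-(b1 * α / ((N : ℝ) + 1)) * ((θ / 12) * (n : ℝ) - (R₀ : ℝ))) * d 0 := by
  have hstep : ∀ j, 1 ≤ j → α ≤ q j → d (j + N) ≤ exp (-(b1 * α)) * d (j - 1) :=
    fun j hj hqj => (hrec j hj).trans <| by
      gcongr
      · exact hdpos _
      · linarith [add_one_le_exp (-(b1 * α)), mul_le_mul_of_nonneg_left hqj hb1.le]
  refine (le_exp_card_div_mul_of_antitone hdmono (hdpos 0) (by positivity) _ hstep n).trans ?_
  gcongr
  · exact hdpos 0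
  rw [neg_mul, neg_div, neg_mul, neg_le_neg_iff, div_mul_eq_mul_div]
  gcongr
  linarith [(Nat.cast_nonneg R₀ : (0 : ℝ) ≤ R₀)]

/-- Exponential tail estimate for the case `n ∉ F`: if at least `(θ/12) * n` of the
indices `1 ≤ j ≤ n` satisfy `q j ≥ α`, then the recurrence
`d (n+N) ≤ (1 - b1 * q n) * d (n-1)` yields
`d (n+N) ≤ exp (-(b1*α/(N+1)) * ((θ/12) * n - R₀)) * d 0`. -/
theorem exp_decay_case_not_F (N R₀ : ℕ) (hR₀ : 1 ≤ R₀)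
    (b1 : ℝ) (hb1 : 0 < b1) (hb1' : b1 ≤ 1)
    (d : ℕ → ℝ) (hdpos : ∀ n, 0 ≤ d n) (hdmono : Antitone d)
    (q : ℕ → ℝ) (hq : ∀ n, 1 ≤ n → q n ∈ Set.Icc (0 : ℝ) 1)
    (hrec : ∀ n, 1 ≤ n → d (n + N) ≤ (1 - b1 * q n) * d (n - 1))
    (α θ : ℝ) (hα : 0 < α) (hθ : 0 < θ) (hθ' : θ ≤ 1)
    (n : ℕ) (hn : R₀ ≤ n)
    (hcard : (θ / 12) * (n : ℝ) ≤
      (((Finset.Icc 1 n).filter fun j => α ≤ q j).card : ℝ)) :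
    d (n + N) ≤
      Real.exp (-(b1 * α / ((N : ℝ) + 1)) * ((θ / 12) * (n : ℝ) - (R₀ : ℝ))) * d 0 :=
  exp_decay_case_not_F_general N R₀ b1 hb1 d hdpos hdmono q hrec α θ hα n hcard
end

section
/- Let (Δ, m) be a finite measure space, let (Λ, dist) be a metric space, and for each f ∈ Λ let R_f : Δ → ℕ be a measurable integrable function. Fix f_0 ∈ Λ and assume: (u_0) for every integer N ≥ 1 and every ε > 0 there exists δ > 0 such that dist(f, f_0) < δ implies m({R_f = j} △ {R_{f_0} = j}) < ε for every 0 ≤ j ≤ N, where △ denotes symmetric difference; and for every ε > 0 there exist an integer N ≥ 1 and δ > 0 such that dist(f, f_0) < δ implies ∑_{j=N}^{∞} m({R_f > j}) < ε. Then for every ε > 0 there exists δ > 0 such that dist(f, f_0) < δ implies ∫_Δ |R_f − R_{f_0}| dm < ε. -/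
open MeasureTheory
open scoped symmDiff
open scoped ENNReal

/-!
Pointwise, `|a - b| ≤ N · [min a N ≠ min b N] + (a - N)⁺ + (b - N)⁺`. The set where the
truncations at level `N` of `R_f` and `R_{f₀}` differ is covered by the symmetric differences
`{R_f = j} ∆ {R_{f₀} = j}`, `j < N`, which (u₀) makes small, and the integral of `(R_f - N)⁺` is
the tail `∑_{j ≥ N} m {R_f > j}`, which the tail hypothesis makes small.
-/

lemma ENNReal.natCast_eq_tsum_ite_lt (n : ℕ) :
    (n : ℝ≥0∞) = ∑' j : ℕ, if j < n then 1 else 0 := by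
  rw [tsum_eq_sum (s := Finset.range n) fun j hj => if_neg (by simpa using hj),
    Finset.sum_ite_of_true fun j hj => Finset.mem_range.1 hj]
  simp

lemma ENNReal.ofReal_abs_natCast_sub_le (a b N : ℕ) :
    ENNReal.ofReal |(a : ℝ) - b| ≤
      (if min a N = min b N then 0 else (N : ℝ≥0∞)) + (a - N : ℕ) + (b - N : ℕ) := by
  calc ENNReal.ofReal |(a : ℝ) - b| = (((a : ℤ) - b).natAbs : ℝ≥0∞) := by
        rw [← ENNReal.ofReal_natCast, Nat.cast_natAbs]
        push_cast
        rfl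
    _ ≤ _ := by
        have : ((a : ℤ) - b).natAbs ≤
            (if min a N = min b N then 0 else N) + (a - N) + (b - N) := by
          split_ifs <;> omega
        exact_mod_cast this

lemma setOf_min_ne_subset_iUnion_symmDiff {α : Type*} (g g₀ : α → ℕ) (N : ℕ) :
    {x | min (g x) N ≠ min (g₀ x) N} ⊆
      ⋃ j ∈ Finset.range N, {x | g x = j} ∆ {x | g₀ x = j} := by
  intro x hx
  simp only [Set.mem_iUnion, Finset.mem_range, Set.mem_symmDiff, Set.mem_ofPred_eq]
  rcases lt_or_ge (g x) (g₀ x) with h | h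
  · exact ⟨g x, by grind, by grind⟩
  · exact ⟨g₀ x, by grind, by grind⟩

section
variable {α : Type*} [MeasurableSpace α] (μ : Measure α) {g g₀ : α → ℕ}

lemma lintegral_natCast_eq_tsum_measure_lt (hg : Measurable g) :
    ∫⁻ x, (g x : ℝ≥0∞) ∂μ = ∑' j : ℕ, μ {x | j < g x} := by
  have hlt (j : ℕ) : MeasurableSet {x | j < g x} :=
    hg (measurableSet_lt measurable_const measurable_id)
  calc ∫⁻ x, (g x : ℝ≥0∞) ∂μ = ∫⁻ x, ∑' j : ℕ, {x | j < g x}.indicator 1 x ∂μ := by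
        simp only [Set.indicator_apply, Set.mem_ofPred_eq, Pi.one_apply,
          ← ENNReal.natCast_eq_tsum_ite_lt]
    _ = ∑' j : ℕ, μ {x | j < g x} := by
        rw [lintegral_tsum fun j => (measurable_one.indicator (hlt j)).aemeasurable]
        simp only [lintegral_indicator_one (hlt _)]

lemma lintegral_natCast_sub_eq_tsum_measure_add_lt (hg : Measurable g) (N : ℕ) :
    ∫⁻ x, ((g x - N : ℕ) : ℝ≥0∞) ∂μ = ∑' j : ℕ, μ {x | N + j < g x} := by
  rw [lintegral_natCast_eq_tsum_measure_lt μ (hg.sub_const N)]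
  simp only [Nat.lt_sub_iff_add_lt']

lemma lintegral_ofReal_abs_sub_le (hg : Measurable g) (hg₀ : Measurable g₀) (N : ℕ) :
    ∫⁻ x, ENNReal.ofReal |(g x : ℝ) - g₀ x| ∂μ ≤
      N * ∑ j ∈ Finset.range N, μ ({x | g x = j} ∆ {x | g₀ x = j}) +
        ∑' j : ℕ, μ {x | N + j < g x} + ∑' j : ℕ, μ {x | N + j < g₀ x} := by
  set bad := {x | min (g x) N ≠ min (g₀ x) N}
  have hbad : MeasurableSet bad :=
    (measurableSet_eq_fun (hg.min measurable_const) (hg₀.min measurable_const)).compl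
  have hpoint (x : α) : ENNReal.ofReal |(g x : ℝ) - g₀ x| ≤
      bad.indicator (fun _ => (N : ℝ≥0∞)) x + ((g x - N : ℕ) : ℝ≥0∞) + ((g₀ x - N : ℕ) : ℝ≥0∞) := by
    simpa only [Set.indicator_apply, bad, Set.mem_ofPred_eq, ite_not] using
      ENNReal.ofReal_abs_natCast_sub_le (g x) (g₀ x) N
  calc ∫⁻ x, ENNReal.ofReal |(g x : ℝ) - g₀ x| ∂μ
      ≤ ∫⁻ x, bad.indicator (fun _ => (N : ℝ≥0∞)) x + ((g x - N : ℕ) : ℝ≥0∞)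
          + ((g₀ x - N : ℕ) : ℝ≥0∞) ∂μ := lintegral_mono hpoint
    _ = N * μ bad + ∑' j : ℕ, μ {x | N + j < g x} + ∑' j : ℕ, μ {x | N + j < g₀ x} := by
        rw [lintegral_add_right _ (by fun_prop), lintegral_add_right _ (by fun_prop),
          lintegral_indicator_const hbad, lintegral_natCast_sub_eq_tsum_measure_add_lt μ hg,
          lintegral_natCast_sub_eq_tsum_measure_add_lt μ hg₀]
    _ ≤ _ := by
        gcongr
        exact (measure_mono (setOf_min_ne_subset_iUnion_symmDiff g g₀ N)).trans
          (measure_biUnion_finset_le _ _)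

end

theorem uniformity_u1_general {Δ : Type*} [MeasurableSpace Δ] (m : Measure Δ)
    {Λ : Type*} [MetricSpace Λ]
    (R : Λ → Δ → ℕ) (hRmeas : ∀ f, Measurable (R f))
    (f₀ : Λ)
    (hu0 : ∀ N : ℕ, 1 ≤ N → ∀ ε : ℝ, 0 < ε → ∃ δ : ℝ, 0 < δ ∧ ∀ f : Λ, dist f f₀ < δ →
      ∀ j ≤ N, m ({x | R f x = j} ∆ {x | R f₀ x = j}) < ENNReal.ofReal ε)
    (htail : ∀ ε : ℝ, 0 < ε → ∃ N : ℕ, 1 ≤ N ∧ ∃ δ : ℝ, 0 < δ ∧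
      ∀ f : Λ, dist f f₀ < δ →
        (∑' j : ℕ, m {x | N + j < R f x}) < ENNReal.ofReal ε) :
    ∀ ε : ℝ, 0 < ε → ∃ δ : ℝ, 0 < δ ∧ ∀ f : Λ, dist f f₀ < δ →
      ∫ x, |(R f x : ℝ) - (R f₀ x : ℝ)| ∂m < ε := by
  intro ε hε
  obtain ⟨N, hN, δ₁, hδ₁, htailN⟩ := htail (ε / 4) (by positivity)
  have hN₀ : (0 : ℝ) < N := by exact_mod_cast hN
  obtain ⟨δ₂, hδ₂, hlevel⟩ := hu0 N hN (ε / (2 * N * N)) (by positivity)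
  refine ⟨min δ₁ δ₂, lt_min hδ₁ hδ₂, fun f hf => ?_⟩
  have hlevel_sum : (N : ℝ≥0∞) * ∑ j ∈ Finset.range N, m ({x | R f x = j} ∆ {x | R f₀ x = j})
      ≤ ENNReal.ofReal (ε / 2) := calc
    _ ≤ N * ∑ j ∈ Finset.range N, ENNReal.ofReal (ε / (2 * N * N)) := by
        gcongr with j hj
        exact (hlevel f (hf.trans_le (min_le_right _ _)) j (Finset.mem_range.1 hj).le).le
    _ = ENNReal.ofReal (ε / 2) := by
        rw [Finset.sum_const, Finset.card_range, nsmul_eq_mul, ← mul_assoc,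
          ← ENNReal.ofReal_natCast, ← ENNReal.ofReal_mul (by positivity),
          ← ENNReal.ofReal_mul (by positivity)]
        congr 1
        field_simp
  have hlintegral : ∫⁻ x, ENNReal.ofReal |(R f x : ℝ) - R f₀ x| ∂m < ENNReal.ofReal ε := calc
    _ ≤ _ := lintegral_ofReal_abs_sub_le m (hRmeas f) (hRmeas f₀) N
    _ < ENNReal.ofReal (ε / 2) + ENNReal.ofReal (ε / 4) + ENNReal.ofReal (ε / 4) :=
        ENNReal.add_lt_add
          (ENNReal.add_lt_add_of_le_of_lt (ne_top_of_le_ne_top ENNReal.ofReal_ne_top hlevel_sum)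
            hlevel_sum (htailN f (hf.trans_le (min_le_left _ _))))
          (htailN f₀ (by simpa using hδ₁))
    _ = ENNReal.ofReal ε := by
        rw [← ENNReal.ofReal_add (by positivity) (by positivity),
          ← ENNReal.ofReal_add (by positivity) (by positivity)]
        ring_nf
  rw [integral_eq_lintegral_of_nonneg_ae (.of_forall fun x => abs_nonneg _) (by fun_prop)]
  exact ENNReal.toReal_lt_of_lt_ofReal hlintegral

/-- Uniformity condition (u₁): if the measures of the level sets `{R_f = j}` vary
continuously with `f` at `f₀` (condition (u₀)) and the tails `∑_{j≥N} m {R_f > j}`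
are uniformly small for `f` near `f₀`, then `f ↦ R_f` is continuous at `f₀` in `L¹(m)`. -/
theorem uniformity_u1 {Δ : Type*} [MeasurableSpace Δ] (m : Measure Δ) [IsFiniteMeasure m]
    {Λ : Type*} [MetricSpace Λ]
    (R : Λ → Δ → ℕ) (hRmeas : ∀ f, Measurable (R f))
    (hRint : ∀ f, Integrable (fun x => (R f x : ℝ)) m)
    (f₀ : Λ)
    (hu0 : ∀ N : ℕ, 1 ≤ N → ∀ ε : ℝ, 0 < ε → ∃ δ : ℝ, 0 < δ ∧ ∀ f : Λ, dist f f₀ < δ →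
      ∀ j ≤ N, m ({x | R f x = j} ∆ {x | R f₀ x = j}) < ENNReal.ofReal ε)
    (htail : ∀ ε : ℝ, 0 < ε → ∃ N : ℕ, 1 ≤ N ∧ ∃ δ : ℝ, 0 < δ ∧
      ∀ f : Λ, dist f f₀ < δ →
        (∑' j : ℕ, m {x | N + j < R f x}) < ENNReal.ofReal ε) :
    ∀ ε : ℝ, 0 < ε → ∃ δ : ℝ, 0 < δ ∧ ∀ f : Λ, dist f f₀ < δ →
      ∫ x, |(R f x : ℝ) - (R f₀ x : ℝ)| ∂m < ε :=
  uniformity_u1_general m R hRmeas f₀ hu0 htail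
end

section
/- Let (M, m) be a finite measure space with m(M) > 0, let f : M → M be measurable, and let B_1, …, B_p, B_{p+1} be a partition of M into measurable sets. Let σ_1 > 1 and C > 0, and suppose that for every n ≥ 1 and every sequence (i_0, i_1, …, i_{n−1}) ∈ {1, …, p+1}^n one has m( B_{i_0} ∩ f^{−1}(B_{i_1}) ∩ ⋯ ∩ f^{−(n−1)}(B_{i_{n−1}}) ) ≤ C·σ_1^{−n}. Then there exists θ > 0, depending only on p and σ_1, such that for m-almost every x ∈ M there is n(x) ∈ ℕ with #{0 ≤ j < n : f^j(x) ∈ B_1 ∪ ⋯ ∪ B_p} ≥ θ·n for every n ≥ n(x). -/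
/-!
Weight each symbol of the partition by `t ∈ (0, 1]` if it is one of `B 0, …, B (p-1)` and by `1`
otherwise. Words of length `n` have total weight `(p t + 1) ^ n`, and a word with fewer than `θ n`
good symbols has weight at least `t ^ (θ n)`, so there are at most `((p t + 1) t ^ (-θ)) ^ n` of
them. Covering the points whose orbit makes fewer than `θ n` good visits before time `n` by the
cylinders of these words gives a bound `C ((p t + 1) t ^ (-θ) / σ₁) ^ n` on their measure. For `t`
and then `θ` small enough the ratio is `< 1`, and Borel–Cantelli concludes.
-/

open MeasureTheory
open scoped Classical ENNReal

open Filter Finset Set Topology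

section Words

variable {α : Type*} [Fintype α] (P : α → Prop) [DecidablePred P]

lemma card_words_card_lt_le {t : ℝ} (ht₀ : 0 < t) (ht₁ : t ≤ 1) (θ : ℝ) (n : ℕ) :
    (#{w : Fin n → α | (#{j | P (w j)} : ℝ) < θ * n} : ℝ) ≤
      ((#{a | P a} * t + #{a | ¬P a}) * t ^ (-θ)) ^ n := by
  set weight : α → ℝ := fun a => if P a then t else 1
  have hweight : ∑ a, weight a = #{a | P a} * t + #{a | ¬P a} := by
    simp only [weight, Finset.sum_ite, sum_const, nsmul_eq_mul, mul_one]
  have hfew : ∀ w ∈ ({w : Fin n → α | (#{j | P (w j)} : ℝ) < θ * n} : Finset _),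
      t ^ (θ * n) ≤ ∏ j, weight (w j) := fun w hw => by
    rw [Finset.prod_ite, prod_const, prod_const_one, mul_one, ← Real.rpow_natCast]
    exact Real.rpow_le_rpow_of_exponent_ge ht₀ ht₁ (mem_filter.mp hw).2.le
  rw [mul_pow, ← Real.rpow_natCast (t ^ (-θ)), ← Real.rpow_mul ht₀.le, neg_mul,
    Real.rpow_neg ht₀.le, ← div_eq_mul_inv, le_div_iff₀ (Real.rpow_pos_of_pos ht₀ _), ← hweight,
    ← Fin.prod_const, Fintype.prod_sum]
  calc _ = ∑ _w ∈ ({w : Fin n → α | (#{j | P (w j)} : ℝ) < θ * n} : Finset _), t ^ (θ * n) := by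
        rw [sum_const, nsmul_eq_mul]
    _ ≤ ∑ w ∈ ({w : Fin n → α | (#{j | P (w j)} : ℝ) < θ * n} : Finset _), ∏ j, weight (w j) :=
        sum_le_sum hfew
    _ ≤ ∑ w : Fin n → α, ∏ j, weight (w j) :=
        sum_le_sum_of_subset_of_nonneg (filter_subset _ _) fun w _ _ =>
          prod_nonneg fun j _ => by positivity

end Words

lemma exists_weight_rate_lt (c : ℝ) {d σ : ℝ} (hdσ : d < σ) :
    ∃ t θ : ℝ, 0 < t ∧ t ≤ 1 ∧ 0 < θ ∧ (c * t + d) * t ^ (-θ) < σ := by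
  have hlin : Tendsto (fun t : ℝ => c * t + d) (𝓝[>] 0) (𝓝 d) :=
    ((by fun_prop : Continuous fun t : ℝ => c * t + d).tendsto' 0 d (by simp)).mono_left
      nhdsWithin_le_nhds
  obtain ⟨t, hlt, ht⟩ := ((hlin.eventually (gt_mem_nhds hdσ)).and
    (Ioc_mem_nhdsGT zero_lt_one)).exists
  have hrate : Tendsto (fun θ : ℝ => (c * t + d) * t ^ (-θ)) (𝓝[>] 0) (𝓝 (c * t + d)) := by
    have hcont : Continuous fun θ : ℝ => (c * t + d) * t ^ (-θ) :=
      continuous_const.mul (continuous_const.rpow continuous_neg fun _ => Or.inl ht.1.ne')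
    exact (hcont.tendsto' 0 _ (by simp)).mono_left nhdsWithin_le_nhds
  obtain ⟨θ, hθ, hθpos⟩ := ((hrate.eventually (gt_mem_nhds hlt)).and self_mem_nhdsWithin).exists
  exact ⟨t, θ, ht.1, ht.2, hθpos, hθ⟩

section Itinerary

variable {M ι : Type*} (f : M → M) (B : ι → Set M)

def cylinder {n : ℕ} (w : Fin n → ι) : Set M := ⋂ j : Fin n, f^[j] ⁻¹' B (w j)

variable {B}

lemma exists_mem_and_iff_mem_biUnion (hB : ⋃ i, B i = univ) (P : ι → Prop) (y : M) :
    ∃ i, y ∈ B i ∧ (P i ↔ y ∈ ⋃ (i) (_ : P i), B i) := by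
  by_cases hy : y ∈ ⋃ (i) (_ : P i), B i
  · obtain ⟨i, hi, hyi⟩ := mem_iUnion₂.mp hy
    exact ⟨i, hyi, iff_of_true hi hy⟩
  · obtain ⟨i, hyi⟩ := mem_iUnion.mp (hB ▸ mem_univ y)
    exact ⟨i, hyi, iff_of_false (fun hi => hy (mem_iUnion₂.mpr ⟨i, hi, hyi⟩)) hy⟩

variable [Fintype ι] (P : ι → Prop) [DecidablePred P]

lemma setOf_card_visits_lt_subset (hB : ⋃ i, B i = univ) (n : ℕ) (κ : ℝ) :
    {x | (#{j ∈ range n | f^[j] x ∈ ⋃ (i) (_ : P i), B i} : ℝ) < κ} ⊆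
      ⋃ w ∈ ({w : Fin n → ι | (#{j | P (w j)} : ℝ) < κ} : Finset _), cylinder f B w := by
  choose symbol hsymbol using exists_mem_and_iff_mem_biUnion hB P
  intro x hx
  have hcount : #{j : Fin n | P (symbol (f^[j] x))} =
      #{j ∈ range n | f^[j] x ∈ ⋃ (i) (_ : P i), B i} := by
    simp only [card_filter, (hsymbol _).2]
    exact Fin.sum_univ_eq_sum_range (fun j => if f^[j] x ∈ ⋃ (i) (_ : P i), B i then 1 else 0) n
  refine mem_iUnion₂.mpr ⟨fun j => symbol (f^[j] x), ?_, mem_iInter.mpr fun j => (hsymbol _).1⟩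
  simpa [hcount] using hx

lemma measure_setOf_card_visits_lt_le [MeasurableSpace M] (m : Measure M)
    (hB : ⋃ i, B i = univ) {n : ℕ} (κ : ℝ) {b : ℝ≥0∞}
    (hcyl : ∀ w : Fin n → ι, m (cylinder f B w) ≤ b) :
    m {x | (#{j ∈ range n | f^[j] x ∈ ⋃ (i) (_ : P i), B i} : ℝ) < κ} ≤
      #{w : Fin n → ι | (#{j | P (w j)} : ℝ) < κ} * b :=
  calc _ ≤ _ := measure_mono (setOf_card_visits_lt_subset f P hB n κ)
    _ ≤ ∑ w ∈ ({w : Fin n → ι | (#{j | P (w j)} : ℝ) < κ} : Finset _), m (cylinder f B w) :=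
        measure_biUnion_finset_le _ _
    _ ≤ _ := by simpa using sum_le_card_nsmul _ _ _ fun w _ => hcyl w

end Itinerary

lemma ae_eventually_notMem_of_measure_le_geometric {M : Type*} [MeasurableSpace M]
    {m : Measure M} {E : ℕ → Set M} {K r : ℝ≥0∞} (hK : K ≠ ∞) (hr : r < 1)
    (hE : ∀ n, m (E n) ≤ K * r ^ n) : ∀ᵐ x ∂m, ∀ᶠ n in atTop, x ∉ E n := by
  refine ae_eventually_notMem (ne_top_of_le_ne_top ?_ (ENNReal.tsum_le_tsum hE))
  rw [ENNReal.tsum_mul_left, ENNReal.tsum_geometric]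
  exact ENNReal.mul_ne_top hK (ENNReal.inv_ne_top.mpr (tsub_pos_of_lt hr).ne')

theorem ae_eventually_mul_le_card_visits {M ι : Type*} [Fintype ι] [MeasurableSpace M]
    (m : Measure M) (f : M → M) {B : ι → Set M} (hB : ⋃ i, B i = Set.univ)
    (P : ι → Prop) [DecidablePred P] {σ : ℝ} (hσ : (#{i | ¬P i} : ℝ) < σ) {K : ℝ≥0∞}
    (hK : K ≠ ∞) (hcyl : ∀ n, 1 ≤ n → ∀ w : Fin n → ι,
      m (cylinder f B w) ≤ K * ENNReal.ofReal (σ ^ (-(n : ℝ)))) :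
    ∃ θ : ℝ, 0 < θ ∧ ∀ᵐ x ∂m, ∀ᶠ n in atTop,
      θ * n ≤ #{j ∈ range n | f^[j] x ∈ ⋃ (i) (_ : P i), B i} := by
  obtain ⟨t, θ, ht₀, ht₁, hθ, hrate⟩ := exists_weight_rate_lt (#{i | P i}) hσ
  set ρ := (#{i | P i} * t + #{i | ¬P i}) * t ^ (-θ)
  have hσ₀ : 0 < σ := (Nat.cast_nonneg _).trans_lt hσ
  have hE : ∀ n, m {x | (#{j ∈ range n | f^[j] x ∈ ⋃ (i) (_ : P i), B i} : ℝ) < θ * n} ≤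
      K * ENNReal.ofReal (ρ / σ) ^ n := by
    rintro (_ | n)
    · simp
    calc _ ≤ #{w : Fin (n + 1) → ι | (#{j | P (w j)} : ℝ) < θ * ↑(n + 1)} *
          (K * ENNReal.ofReal (σ ^ (-((n + 1 : ℕ) : ℝ)))) :=
          measure_setOf_card_visits_lt_le f P m hB _ (hcyl _ le_add_self)
      _ = K * ENNReal.ofReal (#{w : Fin (n + 1) → ι | (#{j | P (w j)} : ℝ) < θ * ↑(n + 1)} *
          σ ^ (-((n + 1 : ℕ) : ℝ))) := by
          rw [ENNReal.ofReal_mul (Nat.cast_nonneg _), ENNReal.ofReal_natCast, mul_left_comm]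
      _ ≤ K * ENNReal.ofReal ((ρ / σ) ^ (n + 1)) := by
          rw [Real.rpow_neg hσ₀.le, Real.rpow_natCast, div_pow, div_eq_mul_inv]
          gcongr
          exact card_words_card_lt_le P ht₀ ht₁ θ (n + 1)
      _ = K * ENNReal.ofReal (ρ / σ) ^ (n + 1) := by rw [ENNReal.ofReal_pow (by positivity)]
  have hρσ : ENNReal.ofReal (ρ / σ) < 1 := ENNReal.ofReal_lt_one.mpr ((div_lt_one hσ₀).mpr hrate)
  refine ⟨θ, hθ, ?_⟩
  filter_upwards [ae_eventually_notMem_of_measure_le_geometric hK hρσ hE] with x hx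
  exact hx.mono fun n hn => not_lt.mp hn

theorem frequency_outside_V_general {M : Type*} [MeasurableSpace M]
    (m : Measure M)
    (f : M → M)
    (p : ℕ) (B : Fin (p + 1) → Set M)
    (hBcover : (⋃ i, B i) = Set.univ)
    (σ₁ C : ℝ) (hσ₁ : 1 < σ₁)
    (hcyl : ∀ n : ℕ, 1 ≤ n → ∀ i : Fin n → Fin (p + 1),
      m (⋂ j : Fin n, f^[(j : ℕ)] ⁻¹' B (i j)) ≤ ENNReal.ofReal (C * σ₁ ^ (-(n : ℝ)))) :
    ∃ θ : ℝ, 0 < θ ∧ ∀ᵐ x ∂m, ∃ n₀ : ℕ, ∀ n, n₀ ≤ n →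
      θ * (n : ℝ) ≤ (((Finset.range n).filter fun j =>
        f^[j] x ∈ ⋃ (i : Fin (p + 1)) (_ : (i : ℕ) < p), B i).card : ℝ) := by
  have hlast : (#{i : Fin (p + 1) | ¬(i : ℕ) < p} : ℝ) = 1 := by
    rw [Nat.cast_eq_one, card_eq_one]
    exact ⟨Fin.last p, by ext i; simp [Fin.ext_iff, Fin.val_last]; omega⟩
  have hcyl' : ∀ n, 1 ≤ n → ∀ w : Fin n → Fin (p + 1),
      m (cylinder f B w) ≤ ENNReal.ofReal C * ENNReal.ofReal (σ₁ ^ (-(n : ℝ))) :=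
    fun n hn w => (hcyl n hn w).trans_eq (ENNReal.ofReal_mul' (by positivity))
  obtain ⟨θ, hθ, hae⟩ := ae_eventually_mul_le_card_visits m f hBcover (fun i => (i : ℕ) < p)
    (hlast.trans_lt hσ₁) ENNReal.ofReal_ne_top hcyl'
  exact ⟨θ, hθ, hae.mono fun x hx => eventually_atTop.mp hx⟩

/-- If cylinders `B_{i_0} ∩ f⁻¹ B_{i_1} ∩ ⋯ ∩ f^{-(n-1)} B_{i_{n-1}}` of a finite measurable
partition `B 0, …, B p` of `M` have measure at most `C σ₁^{-n}` with `σ₁ > 1`, then there is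
`θ > 0` such that almost every orbit spends asymptotic frequency at least `θ` of the time in
`B 0 ∪ ⋯ ∪ B (p-1)` (i.e. outside the last element `B p`). -/
theorem frequency_outside_V {M : Type*} [MeasurableSpace M]
    (m : Measure M) [IsFiniteMeasure m] (hM : 0 < m Set.univ)
    (f : M → M) (hf : Measurable f)
    (p : ℕ) (B : Fin (p + 1) → Set M) (hBmeas : ∀ i, MeasurableSet (B i))
    (hBdisj : Pairwise (Function.onFun Disjoint B)) (hBcover : (⋃ i, B i) = Set.univ)
    (σ₁ C : ℝ) (hσ₁ : 1 < σ₁) (hC : 0 < C)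
    (hcyl : ∀ n : ℕ, 1 ≤ n → ∀ i : Fin n → Fin (p + 1),
      m (⋂ j : Fin n, f^[(j : ℕ)] ⁻¹' B (i j)) ≤ ENNReal.ofReal (C * σ₁ ^ (-(n : ℝ)))) :
    ∃ θ : ℝ, 0 < θ ∧ ∀ᵐ x ∂m, ∃ n₀ : ℕ, ∀ n, n₀ ≤ n →
      θ * (n : ℝ) ≤ (((Finset.range n).filter fun j =>
        f^[j] x ∈ ⋃ (i : Fin (p + 1)) (_ : (i : ℕ) < p), B i).card : ℝ) :=
  frequency_outside_V_general m f p B hBcover σ₁ C hσ₁ hcyl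
end

section
/- Let E = ℝ^d with the Euclidean norm, let 𝒞 ⊆ E be a closed set, and let f : E → E be a map that is differentiable at every point of E \ 𝒞 with invertible derivative Df(x) there. Fix constants B > 1, β > 0, b > 0 with 2b < min{1, 1/β}, 0 < σ < 1, 0 < δ ≤ 1, and δ_1 > 0 with 4δ_1 < δ and 4Bδ_1 < δ^β·|log σ|. Assume condition (s₂): for all x, y ∈ E \ 𝒞 with dist(x, y) < dist(x, 𝒞)/2 one has |log‖Df(x)^{−1}‖ − log‖Df(y)^{−1}‖| ≤ (B/dist(x, 𝒞)^β)·dist(x, y). Let x ∈ E and let n ≥ 1 be a (σ, δ)-hyperbolic time for x, i.e. for every 1 ≤ k ≤ n: ∏_{j=n−k}^{n−1} ‖Df(f^j(x))^{−1}‖ ≤ σ^k and dist_δ(f^{n−k}(x), 𝒞) ≥ σ^{bk}. Then for every 1 ≤ j < n and every point y with dist(y, f^{n−j}(x)) ≤ 2δ_1·σ^{j/2}, one has y ∉ 𝒞 and ‖Df(y)^{−1}‖ ≤ σ^{−1/2}·‖Df(f^{n−j}(x))^{−1}‖. -/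
/-!
At a hyperbolic time `n`, the point `z = f^[n - j] x` satisfies `dist(z, C) ≥ δ σ^{bj}`, while the
ball of radius `ρ = 2 δ₁ σ^{j/2}` around `z` is much smaller, since `b < 1/2`. Hence the ball misses
`C` and lies in the region where (s₂) applies, and (s₂) bounds the oscillation of
`log ‖Df⁻¹‖` on it by `B ρ / (δ σ^{bj})^β`; this is at most `|log σ| / 2` because `bβ < 1/2` and
`4 B δ₁ < δ^β |log σ|`.
-/

/-- The `δ`-truncated distance to a set `C`: it equals `dist(x, C)` if `dist(x, C) < δ`,
and `1` otherwise. -/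
noncomputable def truncDist {d : ℕ} (δ : ℝ) (C : Set (EuclideanSpace ℝ (Fin d)))
    (x : EuclideanSpace ℝ (Fin d)) : ℝ :=
  if Metric.infDist x C < δ then Metric.infDist x C else 1

open Real Metric

/-- Condition (s₂) of the paper, there for `φ = log ‖Df⁻¹‖`. -/
def LocallyLipschitzAwayFrom {X : Type*} [PseudoMetricSpace X] (C : Set X) (B β : ℝ)
    (φ : X → ℝ) : Prop :=
  ∀ x ∉ C, ∀ y ∉ C, dist x y < infDist x C / 2 → |φ x - φ y| ≤ B / infDist x C ^ β * dist x y

theorem LocallyLipschitzAwayFrom.notMem_and_le_add {X : Type*} [PseudoMetricSpace X]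
    {C : Set X} {B β : ℝ} {φ : X → ℝ} (hφ : LocallyLipschitzAwayFrom C B β φ) (hB : 0 ≤ B)
    (hβ : 0 ≤ β) {y z : X} {r ρ : ℝ} (hr : 0 < r) (hrz : r ≤ infDist z C) (hyz : dist y z ≤ ρ)
    (hρ : ρ < r / 2) : y ∉ C ∧ φ y ≤ φ z + B / r ^ β * ρ := by
  have hzy : dist z y < infDist z C / 2 := by rw [dist_comm]; linarith
  have hzC : z ∉ C := fun hz => by linarith [infDist_zero_of_mem hz]
  have hyC : y ∉ C := fun hy => by linarith [infDist_le_dist_of_mem (x := z) hy]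
  have hosc : |φ z - φ y| ≤ B / r ^ β * ρ :=
    calc |φ z - φ y| ≤ B / infDist z C ^ β * dist z y := hφ z hzC y hyC hzy
      _ ≤ B / r ^ β * ρ := by
        rw [dist_comm]
        gcongr
  exact ⟨hyC, by linarith [neg_abs_le (φ z - φ y)]⟩

lemma mul_le_infDist_of_le_truncDist {d : ℕ} {δ r : ℝ} {C : Set (EuclideanSpace ℝ (Fin d))}
    {z : EuclideanSpace ℝ (Fin d)} (hδ0 : 0 ≤ δ) (hδ1 : δ ≤ 1) (hr0 : 0 ≤ r) (hr1 : r ≤ 1)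
    (h : r ≤ truncDist δ C z) : δ * r ≤ infDist z C := by
  unfold truncDist at h
  split_ifs at h with hz
  · exact (mul_le_of_le_one_left hr0 hδ1).trans h
  · exact (mul_le_of_le_one_right hδ0 hr1).trans (not_lt.mp hz)

section Scales

variable {σ b δ δ₁ j : ℝ}

lemma radius_lt_half_mul_rpow (hσ0 : 0 < σ) (hσ1 : σ ≤ 1) (hb : b ≤ 1 / 2) (hj : 0 ≤ j)
    (hδ₁ : 0 ≤ δ₁) (hδ₁a : 4 * δ₁ < δ) :
    2 * δ₁ * σ ^ (j / 2) < δ * σ ^ (b * j) / 2 := by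
  have hσbj : 0 < σ ^ (b * j) := rpow_pos_of_pos hσ0 _
  have : σ ^ (j / 2) ≤ σ ^ (b * j) := rpow_le_rpow_of_exponent_ge hσ0 hσ1 (by nlinarith)
  nlinarith

lemma div_rpow_mul_radius_le {β B : ℝ} (hσ0 : 0 < σ) (hσ1 : σ ≤ 1) (hbβ : b * β ≤ 1 / 2)
    (hj : 0 ≤ j) (hδ : 0 < δ) (hB : 0 ≤ B) (hδ₁ : 0 ≤ δ₁)
    (hδ₁b : 4 * B * δ₁ ≤ δ ^ β * |log σ|) :
    B / (δ * σ ^ (b * j)) ^ β * (2 * δ₁ * σ ^ (j / 2)) ≤ |log σ| / 2 := by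
  have hδβ : 0 < δ ^ β := rpow_pos_of_pos hδ _
  calc B / (δ * σ ^ (b * j)) ^ β * (2 * δ₁ * σ ^ (j / 2))
      = 2 * B * δ₁ / δ ^ β * (σ ^ (j / 2) / σ ^ (b * β * j)) := by
        rw [mul_rpow hδ.le (rpow_nonneg hσ0.le _), ← rpow_mul hσ0.le, mul_right_comm b j β]
        field_simp
    _ ≤ 2 * B * δ₁ / δ ^ β * 1 := by
        gcongr
        refine div_le_one_of_le₀ (rpow_le_rpow_of_exponent_ge hσ0 hσ1 ?_) (rpow_nonneg hσ0.le _)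
        nlinarith
    _ ≤ |log σ| / 2 := by
        rw [mul_one, div_le_iff₀ hδβ]
        linarith

end Scales

lemma le_rpow_neg_half_mul_of_log_le {a c σ : ℝ} (ha : 0 < a) (hc : 0 < c) (hσ0 : 0 < σ)
    (hσ1 : σ ≤ 1) (h : log c ≤ log a + |log σ| / 2) : c ≤ σ ^ (-(1 : ℝ) / 2) * a := by
  rw [← log_le_log_iff hc (by positivity), log_mul (by positivity) ha.ne', log_rpow hσ0]
  rw [abs_of_nonpos (log_nonpos hσ0.le hσ1)] at h
  linarith

theorem hyperbolic_time_lemma_general (d : ℕ) (hd : 1 ≤ d)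
    (C : Set (EuclideanSpace ℝ (Fin d)))
    (f : EuclideanSpace ℝ (Fin d) → EuclideanSpace ℝ (Fin d))
    (Df : EuclideanSpace ℝ (Fin d) →
      (EuclideanSpace ℝ (Fin d) ≃L[ℝ] EuclideanSpace ℝ (Fin d)))
    (B β b σ δ δ₁ : ℝ)
    (hB : 1 < B) (hβ : 0 < β) (hb : 0 < b) (h2b : 2 * b < min 1 (1 / β))
    (hσ0 : 0 < σ) (hσ1 : σ < 1) (hδ0 : 0 < δ) (hδle : δ ≤ 1)
    (hδ₁0 : 0 < δ₁) (hδ₁a : 4 * δ₁ < δ) (hδ₁b : 4 * B * δ₁ < δ ^ β * |Real.log σ|)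
    (hs2 : ∀ x ∉ C, ∀ y ∉ C, dist x y < Metric.infDist x C / 2 →
      |Real.log ‖((Df x).symm : EuclideanSpace ℝ (Fin d) →L[ℝ] EuclideanSpace ℝ (Fin d))‖ -
        Real.log ‖((Df y).symm : EuclideanSpace ℝ (Fin d) →L[ℝ] EuclideanSpace ℝ (Fin d))‖| ≤
        B / Metric.infDist x C ^ β * dist x y)
    (x : EuclideanSpace ℝ (Fin d)) (n : ℕ)
    (hhyp : ∀ k, 1 ≤ k → k ≤ n →
      (∏ j ∈ Finset.Ico (n - k) n,
        ‖((Df (f^[j] x)).symm :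
          EuclideanSpace ℝ (Fin d) →L[ℝ] EuclideanSpace ℝ (Fin d))‖) ≤ σ ^ k ∧
      σ ^ (b * (k : ℝ)) ≤ truncDist δ C (f^[n - k] x)) :
    ∀ j, 1 ≤ j → j < n → ∀ y, dist y (f^[n - j] x) ≤ 2 * δ₁ * σ ^ ((j : ℝ) / 2) →
      y ∉ C ∧
      ‖((Df y).symm : EuclideanSpace ℝ (Fin d) →L[ℝ] EuclideanSpace ℝ (Fin d))‖ ≤
        σ ^ (-(1 : ℝ) / 2) *
        ‖((Df (f^[n - j] x)).symm :
          EuclideanSpace ℝ (Fin d) →L[ℝ] EuclideanSpace ℝ (Fin d))‖ := by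
  intro j hj hjn y hy
  have hB0 : 0 ≤ B := by linarith
  have hj0 : (0 : ℝ) ≤ j := j.cast_nonneg
  have hb2 : b ≤ 1 / 2 := by linarith [min_le_left (1 : ℝ) (1 / β)]
  have hbβ : b * β ≤ 1 / 2 := by
    nlinarith [(lt_div_iff₀ hβ).mp (h2b.trans_le (min_le_right _ _))]
  have hσbj : σ ^ (b * (j : ℝ)) ≤ 1 := rpow_le_one hσ0.le hσ1.le (by positivity)
  have hrz : δ * σ ^ (b * (j : ℝ)) ≤ infDist (f^[n - j] x) C :=
    mul_le_infDist_of_le_truncDist hδ0.le hδle (by positivity) hσbj (hhyp j hj hjn.le).2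
  obtain ⟨hyC, hlog⟩ := LocallyLipschitzAwayFrom.notMem_and_le_add hs2 hB0 hβ.le
    (by positivity) hrz hy (radius_lt_half_mul_rpow hσ0 hσ1.le hb2 hj0 hδ₁0.le hδ₁a)
  have : Nontrivial (EuclideanSpace ℝ (Fin d)) := by
    have : Nonempty (Fin d) := ⟨⟨0, hd⟩⟩
    infer_instance
  refine ⟨hyC, le_rpow_neg_half_mul_of_log_le (Df _).norm_symm_pos (Df y).norm_symm_pos hσ0
    hσ1.le (hlog.trans ?_)⟩
  gcongr
  exact div_rpow_mul_radius_le hσ0 hσ1.le hbβ hj0 hδ0 hB0 hδ₁0.le hδ₁b.le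

/-- Lemma on hyperbolic times: if `n` is a `(σ, δ)`-hyperbolic time for `x`, then for
`1 ≤ j < n` and any `y` with `dist (y, f^{n-j} x) ≤ 2 δ₁ σ^{j/2}` one has `y ∉ C` and
`‖Df(y)⁻¹‖ ≤ σ^{-1/2} ‖Df(f^{n-j} x)⁻¹‖`, provided `4δ₁ < δ`,
`4 B δ₁ < δ^β |log σ|` and the Lipschitz-type condition (s₂) holds. -/
theorem hyperbolic_time_lemma (d : ℕ) (hd : 1 ≤ d)
    (C : Set (EuclideanSpace ℝ (Fin d))) (hC : IsClosed C)
    (f : EuclideanSpace ℝ (Fin d) → EuclideanSpace ℝ (Fin d))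
    (Df : EuclideanSpace ℝ (Fin d) →
      (EuclideanSpace ℝ (Fin d) ≃L[ℝ] EuclideanSpace ℝ (Fin d)))
    (hDf : ∀ x ∉ C, HasFDerivAt f
      ((Df x : EuclideanSpace ℝ (Fin d) →L[ℝ] EuclideanSpace ℝ (Fin d))) x)
    (B β b σ δ δ₁ : ℝ)
    (hB : 1 < B) (hβ : 0 < β) (hb : 0 < b) (h2b : 2 * b < min 1 (1 / β))
    (hσ0 : 0 < σ) (hσ1 : σ < 1) (hδ0 : 0 < δ) (hδle : δ ≤ 1)
    (hδ₁0 : 0 < δ₁) (hδ₁a : 4 * δ₁ < δ) (hδ₁b : 4 * B * δ₁ < δ ^ β * |Real.log σ|)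
    (hs2 : ∀ x ∉ C, ∀ y ∉ C, dist x y < Metric.infDist x C / 2 →
      |Real.log ‖((Df x).symm : EuclideanSpace ℝ (Fin d) →L[ℝ] EuclideanSpace ℝ (Fin d))‖ -
        Real.log ‖((Df y).symm : EuclideanSpace ℝ (Fin d) →L[ℝ] EuclideanSpace ℝ (Fin d))‖| ≤
        B / Metric.infDist x C ^ β * dist x y)
    (x : EuclideanSpace ℝ (Fin d)) (n : ℕ) (hn : 1 ≤ n)
    (hhyp : ∀ k, 1 ≤ k → k ≤ n →
      (∏ j ∈ Finset.Ico (n - k) n,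
        ‖((Df (f^[j] x)).symm :
          EuclideanSpace ℝ (Fin d) →L[ℝ] EuclideanSpace ℝ (Fin d))‖) ≤ σ ^ k ∧
      σ ^ (b * (k : ℝ)) ≤ truncDist δ C (f^[n - k] x)) :
    ∀ j, 1 ≤ j → j < n → ∀ y, dist y (f^[n - j] x) ≤ 2 * δ₁ * σ ^ ((j : ℝ) / 2) →
      y ∉ C ∧
      ‖((Df y).symm : EuclideanSpace ℝ (Fin d) →L[ℝ] EuclideanSpace ℝ (Fin d))‖ ≤
        σ ^ (-(1 : ℝ) / 2) *
        ‖((Df (f^[n - j] x)).symm :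
          EuclideanSpace ℝ (Fin d) →L[ℝ] EuclideanSpace ℝ (Fin d))‖ :=
  hyperbolic_time_lemma_general d hd C f Df B β b σ δ δ₁ hB hβ hb h2b hσ0 hσ1 hδ0 hδle hδ₁0 hδ₁a
    hδ₁b hs2 x n hhyp
end
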